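/- Let C be a closed convex subset of a Hilbert space H and T : C → C nonexpansive with F(T) ≠ ∅. Let α_n, β_n ∈ [0,1] with α_n ≤ 1 − δ for some δ ∈ (0,1] and β_n → 1. Define x₀ ∈ C, z_n = β_n x_n + (1−β_n)Tx_n, y_n = α_n x_n + (1−α_n)Tz_n, C_n = {v ∈ C : ‖y_n − v‖² ≤ ‖x_n − v‖² + (1−α_n)(‖z_n‖² − ‖x_n‖² + 2⟨x_n − z_n, v⟩)}, Q_n = {v ∈ C : ⟨x₀ − x_n, x_n − v⟩ ≥ 0}, x_{n+1} = P_{C_n ∩ Q_n} x₀. Then x_n converges strongly to P_{F(T)} x₀. -/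

import Mathlib

/-!
Fixed points of `T` lie in every `Cs n` by nonexpansiveness, hence inductively in every `Qs n`,
by the variational characterisation of the nearest point `x (n + 1)`. So `‖x₀ - x n‖²` increases
by at least `‖x n - x (n + 1)‖²` at each step and is bounded by `‖x₀ - p‖²` for every fixed point
`p`; consecutive steps therefore shrink, and `β n → 1`, `α n ≤ 1 - δ` turn this into
`‖T (x n) - x n‖ → 0`.

In place of weak sequential compactness we take a weak limit `q` of `x` along an ultrafilter
finer than `atTop`: the Riesz representative of `v ↦ lim ⟪x n, v⟫`. It lies in `C`, and is a
fixed point by demiclosedness of `I - T`. Weak lower semicontinuity gives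
`‖x₀ - q‖² ≤ lim ‖x₀ - x n‖²`, and as `q ∈ Qs n`, `‖x n - q‖² ≤ ‖x₀ - q‖² - ‖x₀ - x n‖² → 0`.
-/

open Filter Topology
open scoped RealInnerProductSpace

theorem tendsto_zero_of_add_sq_le_succ {s d : ℕ → ℝ} {A : ℝ} (hs : Tendsto s atTop (𝓝 A))
    (hd : ∀ n, 0 ≤ d n) (h : ∀ n, s n + d n ^ 2 ≤ s (n + 1)) : Tendsto d atTop (𝓝 0) := by
  have hgap : Tendsto (fun n => √(s (n + 1) - s n)) atTop (𝓝 0) := by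
    simpa using ((hs.comp (tendsto_add_atTop_nat 1)).sub hs).sqrt
  refine squeeze_zero hd (fun n => ?_) hgap
  exact Real.le_sqrt_of_sq_le (by linarith [h n])

theorem tendsto_zero_of_mul_le_mul_add {u c e : ℕ → ℝ} {δ : ℝ} (hδ : 0 < δ) (hu : ∀ n, 0 ≤ u n)
    (hc : Tendsto c atTop (𝓝 0)) (he : Tendsto e atTop (𝓝 0))
    (h : ∀ n, δ * u n ≤ c n * u n + e n) : Tendsto u atTop (𝓝 0) := by
  have hsmall : ∀ᶠ n in atTop, c n ≤ δ / 2 := hc.eventually (eventually_le_nhds (half_pos hδ))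
  refine squeeze_zero' (Eventually.of_forall hu) (hsmall.mono fun n hn => ?_)
    (by simpa using he.const_mul (2 / δ))
  rw [div_mul_eq_mul_div, le_div_iff₀ hδ]
  nlinarith [mul_le_mul_of_nonneg_right hn (hu n), h n]

theorem Ultrafilter.exists_tendsto_of_abs_le {ι : Type*} (U : Ultrafilter ι) {f : ι → ℝ} {M : ℝ}
    (hf : ∀ i, |f i| ≤ M) : ∃ L, Tendsto f U (𝓝 L) := by
  obtain ⟨L, -, hL⟩ := isCompact_Icc.ultrafilter_le_nhds (U.map f)
    (le_principal_iff.2 (mem_map.2 (univ_mem' fun i => abs_le.1 (hf i))))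
  exact ⟨L, hL⟩

section Hilbert

variable {H : Type*} [NormedAddCommGroup H] [InnerProductSpace ℝ H]

theorem norm_sub_sq_add_norm_sub_sq_le {a u v : H} (h : 0 ≤ ⟪a - u, u - v⟫) :
    ‖a - u‖ ^ 2 + ‖u - v‖ ^ 2 ≤ ‖a - v‖ ^ 2 := by
  rw [← sub_add_sub_cancel a u v, norm_add_sq_real]
  linarith

theorem norm_sub_le_of_inner_nonneg {a u v : H} (h : 0 ≤ ⟪a - u, u - v⟫) :
    ‖a - u‖ ≤ ‖a - v‖ :=
  le_of_sq_le_sq (by nlinarith [norm_sub_sq_add_norm_sub_sq_le h]) (norm_nonneg _)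

theorem norm_le_add_of_inner_nonneg {a u v : H} (h : 0 ≤ ⟪a - u, u - v⟫) :
    ‖u‖ ≤ ‖a‖ + ‖a - v‖ :=
  (norm_le_norm_add_norm_sub a u).trans (add_le_add_right (norm_sub_le_of_inner_nonneg h) _)

theorem inner_nonneg_of_forall_norm_sub_le {K : Set H} (hK : Convex ℝ K) {a u : H} (hu : u ∈ K)
    (hmin : ∀ v ∈ K, ‖a - u‖ ≤ ‖a - v‖) {v : H} (hv : v ∈ K) : 0 ≤ ⟪a - u, u - v⟫ := by
  have : Nonempty K := ⟨⟨u, hu⟩⟩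
  have hinf : ‖a - u‖ = ⨅ w : K, ‖a - w‖ := by
    refine le_antisymm (le_ciInf fun w => hmin w w.2) (ciInf_le ?_ (⟨u, hu⟩ : K))
    exact ⟨0, Set.forall_mem_range.2 fun w => norm_nonneg _⟩
  have := (norm_eq_iInf_iff_real_inner_le_zero hK hu).1 hinf v hv
  rw [← neg_sub v u, inner_neg_right]
  linarith

theorem norm_smul_add_smul_sub_sq_le {α : ℝ} (hα : α ∈ Set.Icc (0 : ℝ) 1) {x z u p : H}
    (hu : ‖u - p‖ ≤ ‖z - p‖) :
    ‖α • x + (1 - α) • u - p‖ ^ 2 ≤ α * ‖x - p‖ ^ 2 + (1 - α) * ‖z - p‖ ^ 2 := by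
  have hcomb : ‖α • x + (1 - α) • u - p‖ ^ 2
      = α * ‖x - p‖ ^ 2 + (1 - α) * ‖u - p‖ ^ 2 - α * (1 - α) * ‖x - u‖ ^ 2 := by
    simp only [← real_inner_self_eq_norm_sq, inner_sub_left, inner_sub_right, inner_add_left,
      inner_add_right, real_inner_smul_left, real_inner_smul_right, real_inner_comm x u,
      real_inner_comm x p, real_inner_comm u p]
    ring
  have h1α : 0 ≤ 1 - α := sub_nonneg.2 hα.2
  rw [hcomb]
  nlinarith [mul_le_mul_of_nonneg_left (pow_le_pow_left₀ (norm_nonneg _) hu 2) h1α,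
    mul_nonneg (mul_nonneg hα.1 h1α) (sq_nonneg ‖x - u‖)]

theorem norm_sub_sq_add_mul_eq (α : ℝ) (x z v : H) :
    ‖x - v‖ ^ 2 + (1 - α) * (‖z‖ ^ 2 - ‖x‖ ^ 2 + 2 * ⟪x - z, v⟫)
      = α * ‖x - v‖ ^ 2 + (1 - α) * ‖z - v‖ ^ 2 := by
  simp only [norm_sub_sq_real, inner_sub_left]
  ring

theorem convex_setOf_norm_sub_sq_le (α : ℝ) (a b c : H) :
    Convex ℝ {v : H | ‖a - v‖ ^ 2 ≤ α * ‖b - v‖ ^ 2 + (1 - α) * ‖c - v‖ ^ 2} := by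
  have hlin : {v : H | ‖a - v‖ ^ 2 ≤ α * ‖b - v‖ ^ 2 + (1 - α) * ‖c - v‖ ^ 2}
      = {v | ‖a‖ ^ 2 - α * ‖b‖ ^ 2 - (1 - α) * ‖c‖ ^ 2
          ≤ ⟪(2 : ℝ) • (a - α • b - (1 - α) • c), v⟫} := by
    ext v
    simp only [Set.mem_ofPred_eq, norm_sub_sq_real, inner_sub_left, real_inner_smul_left]
    constructor <;> intro h <;> linarith
  rw [hlin]
  exact convex_halfSpace_ge (innerₛₗ ℝ _).isLinear _

section WeakLimit

variable {ι : Type*}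

theorem Ultrafilter.exists_forall_tendsto_inner [CompleteSpace H] (U : Ultrafilter ι)
    {x : ι → H} {R : ℝ} (hx : ∀ i, ‖x i‖ ≤ R) :
    ∃ w, ∀ v, Tendsto (fun i => ⟪x i, v⟫) U (𝓝 ⟪w, v⟫) := by
  have hbound (v : H) (i : ι) : |⟪x i, v⟫| ≤ R * ‖v‖ :=
    (abs_real_inner_le_norm _ _).trans (mul_le_mul_of_nonneg_right (hx i) (norm_nonneg v))
  have hlim (v : H) : Tendsto (fun i => ⟪x i, v⟫) U (𝓝 (limUnder U fun i => ⟪x i, v⟫)) :=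
    tendsto_nhds_limUnder (U.exists_tendsto_of_abs_le (hbound v))
  let ℓ : H →ₗ[ℝ] ℝ :=
    { toFun := fun v => limUnder U fun i => ⟪x i, v⟫
      map_add' := fun v w => tendsto_nhds_unique (hlim (v + w))
        (by simpa only [inner_add_right] using (hlim v).add (hlim w))
      map_smul' := fun c v => tendsto_nhds_unique (hlim (c • v))
        (by simpa only [real_inner_smul_right, smul_eq_mul, RingHom.id_apply] using
          (hlim v).const_mul c) }
  let ℓc : StrongDual ℝ H := ℓ.mkContinuous R fun v =>
    le_of_tendsto' (hlim v).norm fun i => hbound v i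
  refine ⟨(InnerProductSpace.toDual ℝ H).symm ℓc, fun v => ?_⟩
  rw [InnerProductSpace.toDual_symm_apply]
  exact hlim v

variable {l : Filter ι} {x : ι → H} {w : H}

theorem tendsto_norm_sub_sq_sub_norm_sub_sq (hw : ∀ v, Tendsto (fun i => ⟪x i, v⟫) l (𝓝 ⟪w, v⟫))
    (v : H) : Tendsto (fun i => ‖x i - v‖ ^ 2 - ‖x i - w‖ ^ 2) l (𝓝 (‖w - v‖ ^ 2)) := by
  have hid (i : ι) : ‖x i - v‖ ^ 2 - ‖x i - w‖ ^ 2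
      = ‖w - v‖ ^ 2 + 2 * (⟪x i, w - v⟫ - ⟪w, w - v⟫) := by
    rw [← sub_add_sub_cancel (x i) w v, norm_add_sq_real, inner_sub_left]
    ring
  simp only [hid]
  simpa using ((hw (w - v)).sub_const ⟪w, w - v⟫).const_mul 2 |>.const_add (‖w - v‖ ^ 2)

theorem mem_of_forall_tendsto_inner [CompleteSpace H] [l.NeBot] {C : Set H} (hC : IsClosed C)
    (hconv : Convex ℝ C) (hxC : ∀ i, x i ∈ C)
    (hw : ∀ v, Tendsto (fun i => ⟪x i, v⟫) l (𝓝 ⟪w, v⟫)) : w ∈ C := by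
  obtain ⟨c, hcC, hc⟩ := exists_norm_eq_iInf_of_complete_convex ⟨_, hxC (nonempty_of_neBot l).some⟩
    hC.isComplete hconv w
  have hobtuse (i : ι) : ⟪x i - c, w - c⟫ ≤ 0 := by
    rw [real_inner_comm]
    exact (norm_eq_iInf_iff_real_inner_le_zero hconv hcC).1 hc _ (hxC i)
  have hlim : Tendsto (fun i => ⟪x i - c, w - c⟫) l (𝓝 ⟪w - c, w - c⟫) := by
    simpa only [inner_sub_left] using (hw (w - c)).sub_const ⟪c, w - c⟫
  have hsq : ‖w - c‖ ^ 2 ≤ 0 := by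
    rw [← real_inner_self_eq_norm_sq]
    exact le_of_tendsto' hlim hobtuse
  rwa [sub_eq_zero.1 (norm_eq_zero.1 ((sq_nonpos_iff _).1 hsq))]

theorem LipschitzOnWith.isFixedPt_of_forall_tendsto_inner [l.NeBot] {T : H → H} {C : Set H}
    (hT : LipschitzOnWith 1 T C) {R : ℝ} (hxR : ∀ i, ‖x i‖ ≤ R) (hxC : ∀ i, x i ∈ C) (hwC : w ∈ C)
    (hw : ∀ v, Tendsto (fun i => ⟪x i, v⟫) l (𝓝 ⟪w, v⟫))
    (hTx : Tendsto (fun i => ‖T (x i) - x i‖) l (𝓝 0)) : Function.IsFixedPt T w := by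
  have hbound (i : ι) : ‖x i - T w‖ ^ 2 - ‖x i - w‖ ^ 2
      ≤ ‖T (x i) - x i‖ * (‖T (x i) - x i‖ + 2 * (R + ‖w‖)) := by
    have h1 : ‖x i - T w‖ ≤ ‖T (x i) - x i‖ + ‖x i - w‖ :=
      calc ‖x i - T w‖ ≤ ‖x i - T (x i)‖ + ‖T (x i) - T w‖ :=
            norm_sub_le_norm_sub_add_norm_sub _ _ _
        _ ≤ ‖T (x i) - x i‖ + ‖x i - w‖ := by
          rw [norm_sub_rev (x i)]
          gcongr
          simpa using hT.norm_sub_le (hxC i) hwC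
    have h2 : ‖x i - w‖ ≤ R + ‖w‖ := (_root_.norm_sub_le _ _).trans (by linarith [hxR i])
    nlinarith [norm_nonneg (x i - T w), norm_nonneg (T (x i) - x i), norm_nonneg (x i - w)]
  have hlim : Tendsto (fun i => ‖T (x i) - x i‖ * (‖T (x i) - x i‖ + 2 * (R + ‖w‖))) l (𝓝 0) := by
    simpa using hTx.mul (hTx.add_const (2 * (R + ‖w‖)))
  have hsq : ‖w - T w‖ ^ 2 ≤ 0 :=
    le_of_tendsto_of_tendsto' (tendsto_norm_sub_sq_sub_norm_sub_sq hw (T w)) hlim hbound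
  exact (sub_eq_zero.1 (norm_eq_zero.1 ((sq_nonpos_iff _).1 hsq))).symm

end WeakLimit

section HalfSpaceIteration

variable {x : ℕ → H} {x₀ : H}

theorem monotone_norm_sub_sq (hQ : ∀ n, 0 ≤ ⟪x₀ - x n, x n - x (n + 1)⟫) :
    Monotone fun n => ‖x₀ - x n‖ ^ 2 :=
  monotone_nat_of_le_succ fun n =>
    (le_add_of_nonneg_right (sq_nonneg _)).trans (norm_sub_sq_add_norm_sub_sq_le (hQ n))

theorem tendsto_norm_sub_sq_iSup (hQ : ∀ n, 0 ≤ ⟪x₀ - x n, x n - x (n + 1)⟫) {p : H}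
    (hp : ∀ n, 0 ≤ ⟪x₀ - x n, x n - p⟫) :
    Tendsto (fun n => ‖x₀ - x n‖ ^ 2) atTop (𝓝 (⨆ n, ‖x₀ - x n‖ ^ 2)) :=
  tendsto_atTop_ciSup (monotone_norm_sub_sq hQ) ⟨‖x₀ - p‖ ^ 2, Set.forall_mem_range.2 fun n =>
    (le_add_of_nonneg_right (sq_nonneg _)).trans (norm_sub_sq_add_norm_sub_sq_le (hp n))⟩

theorem tendsto_norm_sub_succ (hQ : ∀ n, 0 ≤ ⟪x₀ - x n, x n - x (n + 1)⟫) {p : H}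
    (hp : ∀ n, 0 ≤ ⟪x₀ - x n, x n - p⟫) :
    Tendsto (fun n => ‖x n - x (n + 1)‖) atTop (𝓝 0) :=
  tendsto_zero_of_add_sq_le_succ (tendsto_norm_sub_sq_iSup hQ hp) (fun _ => norm_nonneg _)
    fun n => norm_sub_sq_add_norm_sub_sq_le (hQ n)

theorem forall_inner_nonneg_of_subset {C S : Set H} {Ks Qs : ℕ → Set H} (hC : Convex ℝ C)
    (hK : ∀ n, Convex ℝ (Ks n)) (hx₀ : x 0 = x₀)
    (hQs : ∀ n, Qs n = {v ∈ C | ⟪x₀ - x n, x n - v⟫ ≥ 0})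
    (hxproj : ∀ n, x (n + 1) ∈ Ks n ∩ Qs n ∧ ∀ v ∈ Ks n ∩ Qs n, ‖x₀ - x (n + 1)‖ ≤ ‖x₀ - v‖)
    (hSC : S ⊆ C) (hSK : ∀ n, S ⊆ Ks n) : ∀ p ∈ S, ∀ n, 0 ≤ ⟪x₀ - x n, x n - p⟫ := by
  have hQconv (n : ℕ) : Convex ℝ (Qs n) := by
    have hhalf : Convex ℝ {v | ⟪x₀ - x n, x n - v⟫ ≥ 0} := by
      simp only [inner_sub_right, ge_iff_le, sub_nonneg]
      exact convex_halfSpace_le (innerₛₗ ℝ _).isLinear _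
    rw [hQs]
    exact hC.inter hhalf
  intro p hp n
  induction n with
  | zero => simp [hx₀]
  | succ n ih =>
    refine inner_nonneg_of_forall_norm_sub_le ((hK n).inter (hQconv n)) (hxproj n).1 (hxproj n).2
      ⟨hSK n hp, ?_⟩
    rw [hQs]
    exact ⟨hSC hp, ih⟩

theorem exists_tendsto_of_inner_nonneg [CompleteSpace H] {S : Set H} (hSne : S.Nonempty)
    (hS : ∀ p ∈ S, ∀ n, 0 ≤ ⟪x₀ - x n, x n - p⟫) (hQ : ∀ n, 0 ≤ ⟪x₀ - x n, x n - x (n + 1)⟫)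
    (hlim : ∀ U : Ultrafilter ℕ, (U : Filter ℕ) ≤ atTop →
      ∀ w, (∀ v, Tendsto (fun n => ⟪x n, v⟫) (U : Filter ℕ) (𝓝 ⟪w, v⟫)) → w ∈ S) :
    ∃ q ∈ S, (∀ p ∈ S, ‖x₀ - q‖ ≤ ‖x₀ - p‖) ∧ Tendsto x atTop (𝓝 q) := by
  obtain ⟨p₀, hp₀⟩ := hSne
  have hs := tendsto_norm_sub_sq_iSup hQ (hS p₀ hp₀)
  set A := ⨆ n, ‖x₀ - x n‖ ^ 2
  have hsA := (monotone_norm_sub_sq hQ).ge_of_tendsto hs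
  have hAp (p : H) (hp : p ∈ S) : A ≤ ‖x₀ - p‖ ^ 2 := le_of_tendsto' hs fun n =>
    (le_add_of_nonneg_right (sq_nonneg _)).trans (norm_sub_sq_add_norm_sub_sq_le (hS p hp n))
  obtain ⟨U, hU⟩ := exists_ultrafilter_le (atTop : Filter ℕ)
  obtain ⟨q, hq⟩ := U.exists_forall_tendsto_inner fun n => norm_le_add_of_inner_nonneg (hS p₀ hp₀ n)
  have hqS := hlim U hU q hq
  have hqA : ‖x₀ - q‖ ^ 2 ≤ A := by
    rw [norm_sub_rev]
    refine le_of_tendsto' (tendsto_norm_sub_sq_sub_norm_sub_sq hq x₀) fun n => ?_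
    rw [norm_sub_rev]
    linarith [hsA n, sq_nonneg ‖x n - q‖]
  refine ⟨q, hqS, fun p hp => ?_, ?_⟩
  · exact le_of_sq_le_sq (hqA.trans (hAp p hp)) (norm_nonneg _)
  · rw [tendsto_iff_norm_sub_tendsto_zero]
    refine squeeze_zero (fun n => norm_nonneg _) (fun n => Real.le_sqrt_of_sq_le ?_)
      (by simpa using (hs.const_sub A).sqrt)
    linarith [norm_sub_sq_add_norm_sub_sq_le (hS q hqS n)]

end HalfSpaceIteration

theorem mul_norm_apply_sub_le {C : Set H} {T : H → H} (hT : LipschitzOnWith 1 T C) {α β δ : ℝ}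
    (hα : α ∈ Set.Icc (0 : ℝ) 1) (hβ : β ∈ Set.Icc (0 : ℝ) 1) (hδ : 0 ≤ δ) (hαδ : α ≤ 1 - δ)
    {x z y x' : H} (hz : z = β • x + (1 - β) • T x) (hy : y = α • x + (1 - α) • T z)
    (hxC : x ∈ C) (hzC : z ∈ C)
    (hx' : ‖y - x'‖ ^ 2 ≤ α * ‖x - x'‖ ^ 2 + (1 - α) * ‖z - x'‖ ^ 2) :
    δ * ‖T x - x‖ ≤ (1 + δ) * (1 - β) * ‖T x - x‖ + 2 * ‖x - x'‖ := by
  have hzx : ‖z - x‖ = (1 - β) * ‖T x - x‖ := by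
    rw [hz, show β • x + (1 - β) • T x - x = (1 - β) • (T x - x) by module, norm_smul,
      Real.norm_of_nonneg (sub_nonneg.2 hβ.2)]
  have hyx : ‖y - x‖ = (1 - α) * ‖T z - x‖ := by
    rw [hy, show α • x + (1 - α) • T z - x = (1 - α) • (T z - x) by module, norm_smul,
      Real.norm_of_nonneg (sub_nonneg.2 hα.2)]
  have hyx' : ‖y - x'‖ ≤ ‖x - x'‖ + ‖z - x‖ := by
    have hzx' : ‖z - x'‖ ≤ ‖x - x'‖ + ‖z - x‖ := by
      linarith [norm_sub_le_norm_sub_add_norm_sub z x x']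
    refine le_of_sq_le_sq (hx'.trans ?_) (by positivity)
    have hxx' : ‖x - x'‖ ≤ ‖x - x'‖ + ‖z - x‖ := le_add_of_nonneg_right (norm_nonneg _)
    nlinarith [mul_le_mul_of_nonneg_left (pow_le_pow_left₀ (norm_nonneg _) hxx' 2) hα.1,
      mul_le_mul_of_nonneg_left (pow_le_pow_left₀ (norm_nonneg _) hzx' 2) (sub_nonneg.2 hα.2)]
  have hTx : ‖T x - x‖ ≤ ‖z - x‖ + ‖T z - x‖ :=
    calc ‖T x - x‖ ≤ ‖T x - T z‖ + ‖T z - x‖ := norm_sub_le_norm_sub_add_norm_sub _ _ _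
      _ ≤ ‖z - x‖ + ‖T z - x‖ := by
        gcongr
        simpa [norm_sub_rev] using hT.norm_sub_le hxC hzC
  have hyx_le : ‖y - x‖ ≤ 2 * ‖x - x'‖ + ‖z - x‖ := by
    linarith [norm_sub_le_norm_sub_add_norm_sub y x' x, norm_sub_rev x' x]
  nlinarith [norm_nonneg (T z - x)]

end Hilbert

/-- Martinez-Yanes–Xu: strong convergence of the modified Ishikawa
hybrid projection algorithm for nonexpansive mappings. -/
theorem martinez_yanes_xu_strong_convergence
    (H : Type*) [NormedAddCommGroup H] [InnerProductSpace ℝ H] [CompleteSpace H]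
    (C : Set H) (hclosed : IsClosed C) (hconv : Convex ℝ C)
    (T : H → H) (hT : Set.MapsTo T C C)
    (hne : ∀ u ∈ C, ∀ v ∈ C, ‖T u - T v‖ ≤ ‖u - v‖)
    (hfix : {q ∈ C | T q = q}.Nonempty)
    (α β : ℕ → ℝ) (hα : ∀ n, α n ∈ Set.Icc (0:ℝ) 1) (hβ : ∀ n, β n ∈ Set.Icc (0:ℝ) 1)
    (δ : ℝ) (hδ : δ ∈ Set.Ioc (0:ℝ) 1) (hαδ : ∀ n, α n ≤ 1 - δ)
    (hβlim : Filter.Tendsto β Filter.atTop (nhds 1))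
    (x z y : ℕ → H) (x₀ : H) (hx₀ : x 0 = x₀) (hx₀C : x₀ ∈ C)
    (hz : ∀ n, z n = β n • x n + (1 - β n) • T (x n))
    (hy : ∀ n, y n = α n • x n + (1 - α n) • T (z n))
    (Cs Qs : ℕ → Set H)
    (hCs : ∀ n, Cs n = {v ∈ C | ‖y n - v‖ ^ 2 ≤ ‖x n - v‖ ^ 2 +
        (1 - α n) * (‖z n‖ ^ 2 - ‖x n‖ ^ 2 + 2 * (inner ℝ (x n - z n) v : ℝ))})
    (hQs : ∀ n, Qs n = {v ∈ C | (inner ℝ (x₀ - x n) (x n - v) : ℝ) ≥ 0})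
    (hxproj : ∀ n, x (n + 1) ∈ Cs n ∩ Qs n ∧
        ∀ v ∈ Cs n ∩ Qs n, ‖x₀ - x (n + 1)‖ ≤ ‖x₀ - v‖) :
    ∃ q, (q ∈ C ∧ T q = q) ∧ (∀ p ∈ C, T p = p → ‖x₀ - q‖ ≤ ‖x₀ - p‖) ∧
      Filter.Tendsto x Filter.atTop (nhds q) := by
  obtain ⟨p₀, hp₀⟩ := hfix
  have hT1 : LipschitzOnWith 1 T C :=
    .of_dist_le_mul fun u hu v hv => by simpa [dist_eq_norm] using hne u hu v hv
  have hCs' (n : ℕ) :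
      Cs n = C ∩ {v | ‖y n - v‖ ^ 2 ≤ α n * ‖x n - v‖ ^ 2 + (1 - α n) * ‖z n - v‖ ^ 2} := by
    simp only [hCs, norm_sub_sq_add_mul_eq]
    rfl
  have hxC : ∀ n, x n ∈ C
    | 0 => hx₀ ▸ hx₀C
    | n + 1 => (hCs' n ▸ (hxproj n).1.1).1
  have hzC (n : ℕ) : z n ∈ C :=
    hz n ▸ hconv (hxC n) (hT (hxC n)) (hβ n).1 (sub_nonneg.2 (hβ n).2) (by ring)
  have hFC (n : ℕ) : {q ∈ C | T q = q} ⊆ Cs n := fun p ⟨hp, hpT⟩ => by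
    rw [hCs', hy]
    refine ⟨hp, norm_smul_add_smul_sub_sq_le (hα n) ?_⟩
    simpa [hpT] using hT1.norm_sub_le (hzC n) hp
  have hFQ := forall_inner_nonneg_of_subset hconv
    (fun n => hCs' n ▸ hconv.inter (convex_setOf_norm_sub_sq_le _ _ _ _)) hx₀ hQs hxproj
    (fun _ hp => hp.1) hFC
  have hQ (n : ℕ) : 0 ≤ ⟪x₀ - x n, x n - x (n + 1)⟫ := (hQs n ▸ (hxproj n).1.2).2
  have hxb (n : ℕ) : ‖x n‖ ≤ ‖x₀‖ + ‖x₀ - p₀‖ := norm_le_add_of_inner_nonneg (hFQ p₀ hp₀ n)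
  have hTx : Tendsto (fun n => ‖T (x n) - x n‖) atTop (𝓝 0) :=
    tendsto_zero_of_mul_le_mul_add hδ.1 (fun _ => norm_nonneg _)
      (by simpa using ((tendsto_const_nhds (x := (1 : ℝ))).sub hβlim).const_mul (1 + δ))
      (by simpa using (tendsto_norm_sub_succ hQ (hFQ p₀ hp₀)).const_mul 2)
      fun n => mul_norm_apply_sub_le hT1 (hα n) (hβ n) hδ.1.le (hαδ n) (hz n) (hy n) (hxC n)
        (hzC n) (hCs' n ▸ (hxproj n).1.1).2
  obtain ⟨q, hq, hqmin, hxq⟩ := exists_tendsto_of_inner_nonneg ⟨p₀, hp₀⟩ hFQ hQ fun U hU w hw => by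
    have hwC := mem_of_forall_tendsto_inner hclosed hconv hxC hw
    exact ⟨hwC, hT1.isFixedPt_of_forall_tendsto_inner hxb hxC hwC hw (hTx.mono_left hU)⟩
  exact ⟨q, hq, fun p hp hpT => hqmin p ⟨hp, hpT⟩, hxq⟩
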